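/- For every smooth compactly supported function u : ℝ → ℝ with support contained in (0,∞), one has (1/4) ∫_0^∞ u(r)²/r² dr ≤ ∫_0^∞ u'(r)² dr. -/

import Mathlib

open MeasureTheory Set

/-- Hardy's inequality on the half-line: for `u ∈ C₀^∞(ℝ₊)`,
`(1/4) ∫_0^∞ u(r)²/r² dr ≤ ∫_0^∞ u'(r)² dr`. -/
theorem hardy_inequality_halfline (u : ℝ → ℝ) (hu : ContDiff ℝ (⊤ : ℕ∞) u)
    (hcomp : HasCompactSupport u) (hsupp : tsupport u ⊆ Set.Ioi 0) :
    (1 / 4) * ∫ r in Set.Ioi (0 : ℝ), u r ^ 2 / r ^ 2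
      ≤ ∫ r in Set.Ioi (0 : ℝ), (deriv u r) ^ 2 := by
  have hud : Differentiable ℝ u := hu.differentiable (by simp)
  have hcd : Continuous (deriv u) := hu.continuous_deriv (by simp)
  -- find an interval (a,b) with 0 < a containing the support
  obtain ⟨a, b, ha0, hab, hK⟩ :
      ∃ a b : ℝ, 0 < a ∧ a < b ∧ tsupport u ⊆ Ioo a b := by
    rcases (tsupport u).eq_empty_or_nonempty with h | h
    · exact ⟨1, 2, one_pos, one_lt_two, by simp [h]⟩
    · have hKc : IsCompact (tsupport u) := hcomp
      have hbdd := hKc.bddBelow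
      have hbdd' := hKc.bddAbove
      have hin : sInf (tsupport u) ∈ tsupport u := hKc.sInf_mem h
      have h0 : 0 < sInf (tsupport u) := hsupp hin
      have hle : sInf (tsupport u) ≤ sSup (tsupport u) := csInf_le_csSup h hbdd hbdd'
      refine ⟨sInf (tsupport u) / 2, sSup (tsupport u) + 1, by positivity,
        by linarith, fun x hx => ?_⟩
      have h1 := csInf_le hbdd hx
      have h2 := le_csSup hbdd' hx
      exact ⟨by linarith, by linarith⟩
  have hu0 : ∀ x, x ∉ Ioo a b → u x = 0 := fun x hx =>
    image_eq_zero_of_notMem_tsupport (fun h => hx (hK h))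
  have hd0 : ∀ x, x ∉ Ioo a b → deriv u x = 0 := by
    intro x hx
    by_contra h
    exact hx (hK (support_deriv_subset (Function.mem_support.2 h)))
  have hpos : ∀ x ∈ Icc a b, (0 : ℝ) < x := fun x hx => lt_of_lt_of_le ha0 hx.1
  have hIccuIcc : uIcc a b = Icc a b := uIcc_of_le hab.le
  -- integrability of the various integrands on [a, b]
  have h1 : IntervalIntegrable (fun x => u x ^ 2 / x ^ 2) volume a b := by
    apply ContinuousOn.intervalIntegrable
    apply ContinuousOn.div (hu.continuous.pow 2).continuousOn (continuous_pow 2).continuousOn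
    intro x hx
    have := hpos x (hIccuIcc ▸ hx)
    positivity
  have h2 : IntervalIntegrable (fun x => (deriv u x) ^ 2) volume a b :=
    (hcd.pow 2).intervalIntegrable a b
  have h3 : IntervalIntegrable (fun x => 2 * u x * deriv u x / x) volume a b := by
    apply ContinuousOn.intervalIntegrable
    apply ContinuousOn.div
      (((continuous_const.mul hu.continuous).mul hcd).continuousOn) continuousOn_id
    intro x hx
    exact (hpos x (hIccuIcc ▸ hx)).ne'
  -- integration by parts
  have hibp : ∀ x ∈ uIcc a b,
      HasDerivAt (fun y => -(u y ^ 2) / y)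
        (u x ^ 2 / x ^ 2 - 2 * u x * deriv u x / x) x := by
    intro x hx
    have hx0 : (0 : ℝ) < x := hpos x (hIccuIcc ▸ hx)
    have hu' : HasDerivAt (fun y => -(u y ^ 2)) (-(2 * u x * deriv u x)) x := by
      have h := ((hud x).hasDerivAt.fun_pow 2).fun_neg
      simpa [pow_one, mul_comm, mul_assoc, mul_left_comm] using h
    have hdiv := hu'.fun_div (hasDerivAt_id' (x := x)) hx0.ne'
    refine hdiv.congr_deriv ?_
    have : x ≠ 0 := hx0.ne'
    field_simp
    ring
  have key : (∫ x in a..b, (u x ^ 2 / x ^ 2 - 2 * u x * deriv u x / x)) = 0 := by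
    rw [intervalIntegral.integral_eq_sub_of_hasDerivAt hibp (h1.sub h3)]
    rw [hu0 a (fun h => lt_irrefl a h.1), hu0 b (fun h => lt_irrefl b h.2)]
    simp
  rw [intervalIntegral.integral_sub h1 h3] at key
  -- pointwise AM-GM bound
  have hmono : (∫ x in a..b, 2 * u x * deriv u x / x)
      ≤ ∫ x in a..b, (u x ^ 2 / x ^ 2 / 2 + 2 * (deriv u x) ^ 2) := by
    apply intervalIntegral.integral_mono_on hab.le h3 ((h1.div_const 2).add (h2.const_mul 2))
    intro x hx
    have hx0 : x ≠ 0 := (hpos x hx).ne'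
    have h2xy : 2 * u x * deriv u x / x = 2 * (u x / x) * deriv u x := by
      field_simp
    have hsq : u x ^ 2 / x ^ 2 = (u x / x) ^ 2 := (div_pow _ _ _).symm
    rw [h2xy, hsq]
    nlinarith [sq_nonneg (u x / x - 2 * deriv u x)]
  rw [intervalIntegral.integral_add (h1.div_const 2) (h2.const_mul 2),
    intervalIntegral.integral_div, intervalIntegral.integral_const_mul] at hmono
  -- identify the set integrals with the interval integrals
  have hE1 : (∫ r in Ioi (0 : ℝ), u r ^ 2 / r ^ 2) = ∫ x in a..b, u x ^ 2 / x ^ 2 := by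
    rw [intervalIntegral.integral_eq_integral_of_support_subset (f := fun x => u x ^ 2 / x ^ 2)
      (fun x hx => Ioo_subset_Ioc_self (hK (subset_tsupport u (fun h => hx (by simp [h]))))),
      MeasureTheory.setIntegral_eq_integral_of_forall_compl_eq_zero]
    intro x hx
    have : u x = 0 := by
      apply hu0
      intro h
      exact hx (lt_trans ha0 h.1)
    simp [this]
  have hE2 : (∫ r in Ioi (0 : ℝ), (deriv u r) ^ 2) = ∫ x in a..b, (deriv u x) ^ 2 := by
    rw [intervalIntegral.integral_eq_integral_of_support_subset (f := fun x => (deriv u x) ^ 2)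
      (fun x hx => Ioo_subset_Ioc_self (hK (support_deriv_subset
        (Function.mem_support.2 (fun h => hx (by simp [h])))))),
      MeasureTheory.setIntegral_eq_integral_of_forall_compl_eq_zero]
    intro x hx
    have : deriv u x = 0 := by
      apply hd0
      intro h
      exact hx (lt_trans ha0 h.1)
    simp [this]
  rw [hE1, hE2]
  linarith
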